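/- Every continuous polynomial map f : ℝ_{≥0} → ℝ of degree ≤ d (where ℝ_{≥0} is the additive semigroup of nonnegative reals and ℝ the additive group of reals) is a polynomial in the usual sense: there exist real coefficients a₀, a₁, …, a_d such that f(t) = a₀ + a₁t + ⋯ + a_d t^d for all t ≥ 0. -/

import Mathlib

/-!
Interpolating `f` at `0, h, …, d h` gives a polynomial `Q_h` of degree `≤ d`. On the multiples
`k h` the difference `f - Q_h` is a polynomial map on `ℕ` of degree `≤ d` vanishing at
`0, …, d`, hence zero (its difference `D_1` has the same property one degree lower). The
interpolant for `h = 1/n` agrees with `Q_1` at every natural number, so `Q_{1/n} = Q_1`, and `f`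
agrees with `Q_1` on the dense set of nonnegative rationals; continuity does the rest.
-/

open Polynomial NNReal

namespace PaperPoly

/-- `ADegLE d f` means that `f : S → G`, from an additive commutative semigroup to an
additive commutative group, is a polynomial map of degree at most `d ∈ ℕ`: the base case
`ADegLE 0 f` means `f` is constant, and `ADegLE (d+1) f` means that for every `s : S` the
difference map `D_s f : t ↦ f (s+t) - f t` satisfies `ADegLE d`. -/
def ADegLE {S : Type*} [AddCommSemigroup S] {G : Type*} [AddCommGroup G] :
    ℕ → (S → G) → Prop
  | 0 => fun f => ∀ t t' : S, f t = f t'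
  | d + 1 => fun f => ∀ s : S, ADegLE d (fun t => f (s + t) - f t)

section

variable {S T G : Type*} [AddCommSemigroup S] [AddCommSemigroup T] [AddCommGroup G]

theorem ADegLE.sub {d : ℕ} {f g : S → G} (hf : ADegLE d f) (hg : ADegLE d g) :
    ADegLE d (f - g) := by
  induction d generalizing f g with
  | zero => intro t t'; simp only [Pi.sub_apply, hf t t', hg t t']
  | succ d ih =>
    intro s
    convert ih (hf s) (hg s) using 1
    funext t
    simp only [Pi.sub_apply]
    abel

theorem ADegLE.comp_addHom {d : ℕ} {f : T → G} (hf : ADegLE d f) (φ : S →ₙ+ T) :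
    ADegLE d (f ∘ φ) := by
  induction d generalizing f with
  | zero => exact fun t t' => hf _ _
  | succ d ih =>
    intro s
    simpa only [Function.comp_def, map_add] using ih (hf (φ s))

theorem ADegLE.eq_zero_of_forall_le {d : ℕ} {u : ℕ → G} (hu : ADegLE d u)
    (hzero : ∀ i ≤ d, u i = 0) : ∀ n, u n = 0 := by
  induction d generalizing u with
  | zero => intro n; rw [hu n 0, hzero 0 le_rfl]
  | succ d ih =>
    have hstep : ∀ m, u (1 + m) - u m = 0 :=
      ih (hu 1) fun i hi => by rw [hzero i (by omega), hzero (1 + i) (by omega), sub_zero]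
    intro n
    induction n with
    | zero => exact hzero 0 (Nat.zero_le _)
    | succ m ihm => rw [add_comm, sub_eq_zero.mp (hstep m), ihm]

end

theorem natDegree_taylor_sub_le {R : Type*} [CommRing R] {p : R[X]} {d : ℕ}
    (hp : p.natDegree ≤ d + 1) (r : R) : (taylor r p - p).natDegree ≤ d := by
  rw [natDegree_le_iff_coeff_eq_zero]
  intro n hn
  rw [coeff_sub, sub_eq_zero]
  rcases (hp.trans (Nat.succ_le_of_lt hn)).eq_or_lt with rfl | hlt
  · exact coeff_taylor_natDegree (r := r) (f := p)
  · rw [coeff_eq_zero_of_natDegree_lt hlt,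
      coeff_eq_zero_of_natDegree_lt ((natDegree_taylor p r).trans_lt hlt)]

theorem adegLE_eval_of_natDegree_le {R : Type*} [CommRing R] {d : ℕ} {p : R[X]}
    (hp : p.natDegree ≤ d) : ADegLE d fun x : R => p.eval x := by
  induction d generalizing p with
  | zero => intro x y; rw [eq_C_of_natDegree_le_zero hp]; simp only [eval_C]
  | succ d ih =>
    intro r
    convert ih (natDegree_taylor_sub_le hp r) using 1
    funext x
    rw [eval_sub, taylor_eval, add_comm]

theorem exists_polynomial_eq_on_multiples {f : ℝ≥0 → ℝ} {d : ℕ} (hf : ADegLE d f) {h : ℝ≥0}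
    (hh : h ≠ 0) : ∃ Q : ℝ[X], Q.natDegree ≤ d ∧ ∀ k : ℕ, f (k * h) = Q.eval ((k : ℝ) * h) := by
  have hinj : Set.InjOn (fun i : ℕ => (i : ℝ) * h) (Finset.range (d + 1)) := fun i _ j _ hij =>
    by simpa [hh] using hij
  set Q := Lagrange.interpolate (Finset.range (d + 1)) (fun i : ℕ => (i : ℝ) * h)
    (fun i => f (i * h))
  have hQ : Q.natDegree ≤ d := by
    have : Q.degree < (Finset.range (d + 1)).card := Lagrange.degree_interpolate_lt _ hinj
    rw [Finset.card_range] at this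
    exact natDegree_le_of_degree_le (Order.lt_succ_iff.mp (by exact_mod_cast this))
  have hQ_map := (adegLE_eval_of_natDegree_le hQ).comp_addHom NNReal.toRealHom.toAddHom
  have hdiff := (hf.sub hQ_map).comp_addHom (multiplesHom ℝ≥0 h).toAddHom
  have hnode (i : ℕ) (hi : i ≤ d) : Q.eval ((i : ℝ) * h) = f (i * h) :=
    Lagrange.eval_interpolate_at_node _ hinj (Finset.mem_range_succ_iff.mpr hi)
  refine ⟨Q, hQ, fun k => ?_⟩
  simpa [sub_eq_zero] using hdiff.eq_zero_of_forall_le (fun i hi => by simp [hnode i hi]) k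

theorem denseRange_nnratCast : DenseRange ((↑) : ℚ≥0 → ℝ≥0) := by
  refine dense_of_exists_between fun a b hab => ?_
  obtain ⟨q, hq, haq, hqb⟩ := (NNReal.lt_iff_exists_rat_btwn a b).mp hab
  refine ⟨_, ⟨q.toNNRat, ?_⟩, haq, hqb⟩
  ext
  rw [Real.coe_toNNReal _ (Rat.cast_nonneg.mpr hq), ← NNReal.coe_toRealHom, map_nnratCast,
    ← Rat.cast_nnratCast, Rat.coe_toNNRat q hq]

theorem exists_polynomial_eq_on_nnrat {f : ℝ≥0 → ℝ} {d : ℕ} (hf : ADegLE d f) :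
    ∃ P : ℝ[X], P.natDegree ≤ d ∧ ∀ q : ℚ≥0, f q = P.eval (q : ℝ) := by
  choose! Q hQdeg hQ using fun h (hh : h ≠ 0) => exists_polynomial_eq_on_multiples hf hh
  refine ⟨Q 1, hQdeg 1 one_ne_zero, fun q => ?_⟩
  set h : ℝ≥0 := (q.den : ℝ≥0)⁻¹
  have hh : h ≠ 0 := by simp [h]
  have hQh : Q h = Q 1 := by
    apply eq_of_infinite_eval_eq
    refine (Set.infinite_range_of_injective Nat.cast_injective).mono ?_
    rintro _ ⟨k, rfl⟩
    have hk : ((k * q.den : ℕ) : ℝ≥0) * h = k := by simp [h]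
    have hkℝ : ((k * q.den : ℕ) : ℝ) * h = k := by exact_mod_cast congrArg NNReal.toReal hk
    have hfk := hQ h hh (k * q.den)
    rw [hk, hkℝ] at hfk
    calc (Q h).eval (k : ℝ) = f k := hfk.symm
      _ = (Q 1).eval (k : ℝ) := by simpa using hQ 1 one_ne_zero k
  have hq : (q : ℝ≥0) = q.num * h := by rw [NNRat.cast_def, div_eq_mul_inv]
  rw [hq, hQ h hh q.num, hQh]
  simp [h, NNRat.cast_def, div_eq_mul_inv]

/-- Every continuous polynomial map `f : ℝ_{≥0} → ℝ` of degree `≤ d` is a polynomial in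
the usual sense: there are real coefficients `a 0, …, a d` with
`f t = a 0 + a 1 * t + ⋯ + a d * t ^ d` for all `t ≥ 0`. -/
theorem continuous_polynomial_map_real (f : NNReal → ℝ) (d : ℕ)
    (hf : ADegLE d f) (hcont : Continuous f) :
    ∃ a : Fin (d + 1) → ℝ,
      ∀ t : NNReal, f t = ∑ i : Fin (d + 1), a i * (t : ℝ) ^ (i : ℕ) := by
  obtain ⟨P, hPdeg, hP⟩ := exists_polynomial_eq_on_nnrat hf
  have hfP : f = fun t : ℝ≥0 => P.eval (t : ℝ) :=
    denseRange_nnratCast.equalizer hcont (by fun_prop) <| funext fun q =>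
      (hP q).trans (congrArg P.eval (map_nnratCast NNReal.toRealHom q).symm)
  refine ⟨fun i => P.coeff i, fun t => (congrFun hfP t).trans ?_⟩
  rw [eval_eq_sum_range' (Nat.lt_succ_of_le hPdeg), ← Fin.sum_univ_eq_sum_range]

end PaperPoly
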